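/- arXiv:1611.00522 — 7 statements merged into one kernel-verified Lean document; each statement's English description precedes it below -/
import Mathlib

section
/- Let A = ρ c_p M^{-1} (Γ^T - I_n) F where M = diag(c_p m) with m_i > 0, F = diag(f) with f_i > 0, ρ, c_p > 0, and Γ = [γ_ij] with 0 < γ_ij and for each rack i the flow balance f_i = Σ_j γ_ji f_j + f_sup^i holds with f_sup^i > 0 (so Σ_j γ_ji f_j < f_i). Then A is strictly row diagonally dominant with strictly negative diagonal entries. -/
/-!
The matrix is `diagonal (ρ / m) * ((Γᵀ - 1) * diagonal f)`. Row `i` of `(Γᵀ - 1) * diagonal f`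
has off-diagonal entries `γ_ji f_j ≥ 0` and diagonal entry `(γ_ii - 1) f_i`, so its strict
dominance with negative diagonal is exactly the strict flow inequality `∑_j γ_ji f_j < f_i`;
scaling the row by `ρ / m_i > 0` preserves both properties.
-/

open Matrix Finset

namespace Matrix

theorem inv_diagonal_of_ne_zero {ι K : Type*} [Fintype ι] [DecidableEq ι] [Field K]
    {v : ι → K} (hv : ∀ i, v i ≠ 0) : (diagonal v)⁻¹ = diagonal v⁻¹ :=
  inv_eq_left_inv <| by
    rw [diagonal_mul_diagonal, ← diagonal_one]
    exact congrArg diagonal (funext fun i => inv_mul_cancel₀ (hv i))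

variable {ι : Type*} [Fintype ι] [DecidableEq ι]

def IsNegDiagStrictlyDominantRow (A : Matrix ι ι ℝ) (i : ι) : Prop :=
  A i i < 0 ∧ ∑ j ∈ univ.erase i, |A i j| < |A i i|

theorem IsNegDiagStrictlyDominantRow.diagonal_mul {A : Matrix ι ι ℝ} {d : ι → ℝ} {i : ι}
    (hA : A.IsNegDiagStrictlyDominantRow i) (hd : 0 < d i) :
    (diagonal d * A).IsNegDiagStrictlyDominantRow i := by
  simp only [IsNegDiagStrictlyDominantRow, Matrix.diagonal_mul, abs_mul, abs_of_pos hd,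
    ← mul_sum]
  exact ⟨mul_neg_of_pos_of_neg hd hA.1, mul_lt_mul_of_pos_left hA.2 hd⟩

theorem isNegDiagStrictlyDominantRow_transpose_sub_one_mul_diagonal {Γ : Matrix ι ι ℝ}
    {f : ι → ℝ} {i : ι} (hΓ : ∀ j, 0 ≤ Γ j i) (hf : ∀ j, 0 ≤ f j)
    (hflow : ∑ j, Γ j i * f j < f i) :
    ((Γᵀ - 1) * diagonal f).IsNegDiagStrictlyDominantRow i := by
  have hterm : ∀ j, 0 ≤ Γ j i * f j := fun j => mul_nonneg (hΓ j) (hf j)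
  have hself : Γ i i * f i ≤ ∑ j, Γ j i * f j :=
    single_le_sum (fun j _ => hterm j) (mem_univ i)
  have hdiag : ((Γᵀ - 1) * diagonal f) i i = Γ i i * f i - f i := by
    rw [mul_diagonal, sub_apply, transpose_apply, one_apply_eq, sub_one_mul]
  have hoff : ∀ j ∈ univ.erase i, |((Γᵀ - 1) * diagonal f) i j| = Γ j i * f j := fun j hj => by
    rw [mul_diagonal, sub_apply, transpose_apply, one_apply_ne (ne_of_mem_erase hj).symm,
      sub_zero, abs_of_nonneg (hterm j)]
  have hneg : ((Γᵀ - 1) * diagonal f) i i < 0 := by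
    rw [hdiag]
    linarith
  refine ⟨hneg, ?_⟩
  rw [sum_congr rfl hoff, sum_erase_eq_sub (mem_univ i), abs_of_neg hneg, hdiag]
  linarith

end Matrix

/-- The data-center matrix `A = ρ c_p M⁻¹ (Γᵀ - I) F` is strictly row
diagonally dominant with strictly negative diagonal entries. -/
theorem stmt0 (n : ℕ) (ρ cp : ℝ) (m f fsup : Fin n → ℝ) (Γ : Matrix (Fin n) (Fin n) ℝ)
    (hρ : 0 < ρ) (hcp : 0 < cp)
    (hm : ∀ i, 0 < m i) (hf : ∀ i, 0 < f i)
    (hγ : ∀ i j, 0 < Γ i j)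
    (hfsup : ∀ i, 0 < fsup i)
    (hbal : ∀ i, f i = (∑ j, Γ j i * f j) + fsup i)
    (A : Matrix (Fin n) (Fin n) ℝ)
    (hA : A = (ρ * cp) • ((Matrix.diagonal (fun i => cp * m i))⁻¹ *
        (Γ.transpose - 1) * Matrix.diagonal f)) :
    ∀ i, A i i < 0 ∧ ∑ j ∈ Finset.univ.erase i, |A i j| < |A i i| := by
  have hscale : (ρ * cp) • (diagonal fun i => cp * m i)⁻¹ = diagonal fun i => ρ / m i := by
    rw [inv_diagonal_of_ne_zero fun i => (mul_pos hcp (hm i)).ne', ← diagonal_smul]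
    congr 1
    funext i
    simp only [Pi.smul_apply, Pi.inv_apply, smul_eq_mul]
    field_simp [hcp.ne']
  have hA' : A = diagonal (fun i => ρ / m i) * ((Γᵀ - 1) * diagonal f) := by
    rw [hA, Matrix.mul_assoc, ← smul_mul, hscale]
  intro i
  rw [hA']
  refine IsNegDiagStrictlyDominantRow.diagonal_mul ?_ (div_pos hρ (hm i))
  exact isNegDiagStrictlyDominantRow_transpose_sub_one_mul_diagonal (fun j => (hγ j i).le)
    (fun j => (hf j).le) (by linarith [hbal i, hfsup i])
end

section
/- Under the flow-balance assumptions on the data center model, the matrix A = ρ c_p M^{-1}(Γ^T − I_n)F is invertible. -/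
open Matrix Finset

/-- Under the flow-balance assumptions of the data-center model,
the matrix `A = ρ c_p M⁻¹ (Γᵀ - I) F` is invertible. -/
theorem stmt2 (n : ℕ) (ρ cp : ℝ) (m f fsup : Fin n → ℝ) (Γ : Matrix (Fin n) (Fin n) ℝ)
    (hρ : 0 < ρ) (hcp : 0 < cp)
    (hm : ∀ i, 0 < m i) (hf : ∀ i, 0 < f i)
    (hγ : ∀ i j, 0 < Γ i j) (hγ1 : ∀ i j, Γ i j < 1)
    (hfsup : ∀ i, 0 < fsup i)
    (hbal : ∀ i, f i = (∑ j, Γ j i * f j) + fsup i)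
    (A : Matrix (Fin n) (Fin n) ℝ)
    (hA : A = (ρ * cp) • ((Matrix.diagonal (fun i => cp * m i))⁻¹ *
        (Γ.transpose - 1) * Matrix.diagonal f)) :
    IsUnit A := by
  have hentry : ∀ i j, ((Γ.transpose - 1) * Matrix.diagonal f) i j
      = (Γ j i - if i = j then 1 else 0) * f j := by
    intro i j
    simp [Matrix.mul_apply, Matrix.diagonal, Matrix.one_apply, Matrix.sub_apply,
      Finset.sum_ite_eq', eq_comm]
  -- det of (Γᵀ - 1) * diagonal f is nonzero by strict row diagonal dominance
  have hC : ((Γ.transpose - 1) * Matrix.diagonal f).det ≠ 0 := by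
    apply det_ne_zero_of_sum_row_lt_diag
    intro k
    calc ∑ j ∈ Finset.univ.erase k, ‖((Γ.transpose - 1) * Matrix.diagonal f) k j‖
        = ∑ j ∈ Finset.univ.erase k, Γ j k * f j := by
          apply Finset.sum_congr rfl
          intro j hj
          have hjk : ¬ (k = j) := fun h => (Finset.mem_erase.mp hj).1 h.symm
          rw [hentry, if_neg hjk, sub_zero, Real.norm_eq_abs,
            abs_of_pos (mul_pos (hγ j k) (hf j))]
      _ = (∑ j, Γ j k * f j) - Γ k k * f k :=
          Finset.sum_erase_eq_sub (Finset.mem_univ k)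
      _ = f k - fsup k - Γ k k * f k := by have := hbal k; linarith
      _ < (1 - Γ k k) * f k := by nlinarith [hfsup k]
      _ = ‖((Γ.transpose - 1) * Matrix.diagonal f) k k‖ := by
          rw [hentry, if_pos rfl, Real.norm_eq_abs,
            abs_of_neg (by nlinarith [hγ1 k k, hf k] : (Γ k k - 1) * f k < 0)]
          ring
  -- diagonal mass matrix is invertible
  have hMdet : (Matrix.diagonal (fun i => cp * m i)).det ≠ 0 := by
    rw [Matrix.det_diagonal]
    exact Finset.prod_ne_zero_iff.mpr fun i _ => (mul_pos hcp (hm i)).ne'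
  have hMinv : (Matrix.diagonal (fun i => cp * m i))⁻¹.det ≠ 0 := by
    rw [Matrix.det_nonsing_inv, Ring.inverse_eq_inv]
    exact inv_ne_zero hMdet
  rw [Matrix.isUnit_iff_isUnit_det, hA]
  rw [Matrix.det_smul, Matrix.mul_assoc, Matrix.det_mul]
  exact isUnit_iff_ne_zero.mpr (by positivity)
end

section
/- Suppose the steady-state constraint 0 = A(T_out − T_sup 𝟙) + M^{-1}(V + W D) and the workload constraint 𝟙^T D = D* hold, with T_sup a scalar. Then T_sup = C_1^T T_out + C_2, where C_1^T = (𝟙^T W^{-1} M A)/(𝟙^T W^{-1} M A 𝟙) and C_2 = (D* + 𝟙^T W^{-1} V)/(𝟙^T W^{-1} M A 𝟙). In particular T_sup is uniquely determined by T_out and D*. -/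
/-!
Left-multiplying the steady-state equation by the row vector `𝟙ᵀ W⁻¹ M` cancels `M⁻¹` and
turns `𝟙ᵀ W⁻¹ W D` into the total workload `𝟙ᵀ D = D*`. What remains is a scalar linear
equation `s · T_sup = 𝟙ᵀ W⁻¹ M A T_out + 𝟙ᵀ W⁻¹ V + D*` with `s = 𝟙ᵀ W⁻¹ M A 𝟙 ≠ 0`.
-/

open Matrix

variable {ι : Type*} [Fintype ι] [DecidableEq ι]

lemma Matrix.isUnit_det_diagonal_of_ne_zero {K : Type*} [Field K] {d : ι → K}
    (hd : ∀ i, d i ≠ 0) : IsUnit (diagonal d).det := by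
  rw [det_diagonal]
  exact isUnit_iff_ne_zero.mpr (Finset.prod_ne_zero_iff.mpr fun i _ => hd i)

lemma steady_state_supply_mul_eq {R : Type*} [CommRing R] {A W M : Matrix ι ι R}
    {V T D e : ι → R} {t : R}
    (hW : IsUnit W.det) (hM : IsUnit M.det)
    (hsteady : 0 = A *ᵥ (T - t • e) + M⁻¹ *ᵥ (V + W *ᵥ D)) :
    t * (vecMul e (W⁻¹ * M * A) ⬝ᵥ e) =
      vecMul e (W⁻¹ * M * A) ⬝ᵥ T + e ⬝ᵥ W⁻¹ *ᵥ V + e ⬝ᵥ D := by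
  have key := congrArg (vecMul e (W⁻¹ * M) ⬝ᵥ ·) hsteady
  have hA : vecMul e (W⁻¹ * M) ⬝ᵥ A *ᵥ (T - t • e) =
      vecMul e (W⁻¹ * M * A) ⬝ᵥ T - t * (vecMul e (W⁻¹ * M * A) ⬝ᵥ e) := by
    rw [dotProduct_mulVec, vecMul_vecMul, dotProduct_sub, dotProduct_smul, smul_eq_mul]
  have hV : vecMul e (W⁻¹ * M) ⬝ᵥ M⁻¹ *ᵥ (V + W *ᵥ D) = e ⬝ᵥ W⁻¹ *ᵥ V + e ⬝ᵥ D := by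
    rw [dotProduct_mulVec, vecMul_vecMul, Matrix.mul_assoc, mul_nonsing_inv M hM,
      Matrix.mul_one, dotProduct_add, dotProduct_mulVec _ W, vecMul_vecMul,
      nonsing_inv_mul W hW, vecMul_one, ← dotProduct_mulVec]
  simp only [dotProduct_zero, dotProduct_add, hA, hV] at key
  linear_combination key

theorem stmt7_general (n : ℕ) (w m : Fin n → ℝ) (cp : ℝ) (A : Matrix (Fin n) (Fin n) ℝ)
    (V Tout D : Fin n → ℝ) (Tsup Dstar : ℝ)
    (hw : ∀ i, 0 < w i) (hm : ∀ i, 0 < m i) (hcp : 0 < cp)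
    (ones : Fin n → ℝ)
    (W M : Matrix (Fin n) (Fin n) ℝ)
    (hW : W = Matrix.diagonal w) (hM : M = Matrix.diagonal (fun i => cp * m i))
    (s : ℝ) (hs : s = Matrix.vecMul ones (W⁻¹ * M * A) ⬝ᵥ ones) (hs0 : s ≠ 0)
    (C1 : Fin n → ℝ) (hC1 : C1 = s⁻¹ • Matrix.vecMul ones (W⁻¹ * M * A))
    (C2 : ℝ) (hC2 : C2 = (Dstar + ones ⬝ᵥ (W⁻¹).mulVec V) / s)
    (hsteady : 0 = A.mulVec (Tout - Tsup • ones) + (M⁻¹).mulVec (V + W.mulVec D))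
    (hwork : ones ⬝ᵥ D = Dstar) :
    Tsup = C1 ⬝ᵥ Tout + C2 := by
  have hWdet : IsUnit W.det :=
    hW ▸ isUnit_det_diagonal_of_ne_zero fun i => (hw i).ne'
  have hMdet : IsUnit M.det :=
    hM ▸ isUnit_det_diagonal_of_ne_zero fun i => (mul_pos hcp (hm i)).ne'
  have key := steady_state_supply_mul_eq hWdet hMdet hsteady
  rw [← hs, hwork] at key
  rw [hC1, hC2, smul_dotProduct, smul_eq_mul]
  field_simp
  linear_combination key

/-- At steady state with total workload `D*`, the supply temperature
is uniquely determined: `T_sup = C₁ᵀ T_out + C₂(D*)`. -/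
theorem stmt7 (n : ℕ) (w m : Fin n → ℝ) (cp : ℝ) (A : Matrix (Fin n) (Fin n) ℝ)
    (V Tout D : Fin n → ℝ) (Tsup Dstar : ℝ)
    (hw : ∀ i, 0 < w i) (hm : ∀ i, 0 < m i) (hcp : 0 < cp)
    (ones : Fin n → ℝ) (hones : ones = fun _ => 1)
    (W M : Matrix (Fin n) (Fin n) ℝ)
    (hW : W = Matrix.diagonal w) (hM : M = Matrix.diagonal (fun i => cp * m i))
    (s : ℝ) (hs : s = Matrix.vecMul ones (W⁻¹ * M * A) ⬝ᵥ ones) (hs0 : s ≠ 0)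
    (C1 : Fin n → ℝ) (hC1 : C1 = s⁻¹ • Matrix.vecMul ones (W⁻¹ * M * A))
    (C2 : ℝ) (hC2 : C2 = (Dstar + ones ⬝ᵥ (W⁻¹).mulVec V) / s)
    (hsteady : 0 = A.mulVec (Tout - Tsup • ones) + (M⁻¹).mulVec (V + W.mulVec D))
    (hwork : ones ⬝ᵥ D = Dstar) :
    Tsup = C1 ⬝ᵥ Tout + C2 :=
  stmt7_general n w m cp A V Tout D Tsup Dstar hw hm hcp ones W M hW hM s hs hs0 C1 hC1 C2 hC2
    hsteady hwork
end

section
/- Suppose 0 = A(T_out − T_sup 𝟙) + M^{-1}(V + W D) and 𝟙^T D = D*, with T_sup scalar. Then D = C_3 T_out + C_4, where C_3 = −W^{-1} M A (I_n − 𝟙 C_1^T) and C_4 = W^{-1} M A 𝟙 C_2 − W^{-1} V, with C_1, C_2 as previously defined. Hence the workload distribution is uniquely determined by T_out and D*. -/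
/-!
Clearing `M⁻¹` and then `W` from the steady-state equation gives the workload as an affine
function `D = -B (T_out - T_sup 𝟙) - W⁻¹ V` of the temperatures, with `B = W⁻¹ M A`.
Pairing with `𝟙` turns the constraint `𝟙ᵀ D = D*` into a linear equation for the unknown
scalar `T_sup`, with coefficient `s = 𝟙ᵀ B 𝟙 ≠ 0`; hence `T_sup = C₁ᵀ T_out + C₂`, and
substituting back gives `D = C₃ T_out + C₄`.
-/

open Matrix

namespace Matrix

variable {ι K : Type*} [Fintype ι] [Field K]

theorem eq_neg_mulVec_sub_of_mulVec_add_inv_mulVec_eq_zero [DecidableEq ι] {A M W : Matrix ι ι K}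
    {x V D : ι → K} (hM : IsUnit M.det) (hW : IsUnit W.det)
    (h : A *ᵥ x + M⁻¹ *ᵥ (V + W *ᵥ D) = 0) :
    D = -(W⁻¹ * M * A) *ᵥ x - W⁻¹ *ᵥ V := by
  have hWD : W *ᵥ D = -(M * A) *ᵥ x - V := by
    have h' := congrArg (M *ᵥ ·) h
    simp only [mulVec_add, mulVec_mulVec, ← mul_assoc, mul_nonsing_inv _ hM, one_mul,
      one_mulVec, mulVec_zero] at h'
    rw [neg_mulVec]
    linear_combination h'
  calc D = W⁻¹ *ᵥ (W *ᵥ D) := by rw [mulVec_mulVec, nonsing_inv_mul _ hW, one_mulVec]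
    _ = -(W⁻¹ * M * A) *ᵥ x - W⁻¹ *ᵥ V := by
      rw [hWD, mulVec_sub, neg_mulVec, mulVec_neg, mulVec_mulVec, mul_assoc, neg_mulVec]

theorem mulVec_one_sub_vecMulVec {R : Type*} [CommRing R] [DecidableEq ι] (e c T : ι → R) :
    (1 - vecMulVec e c) *ᵥ T = T - (c ⬝ᵥ T) • e := by
  rw [sub_mulVec, one_mulVec, vecMulVec_mulVec, op_smul_eq_smul]

theorem eq_div_of_dotProduct_eq {B : Matrix ι ι K} {e T d D : ι → K} {t c : K}
    (hD : D = -B *ᵥ (T - t • e) + d) (he : e ⬝ᵥ D = c) (hs : e ᵥ* B ⬝ᵥ e ≠ 0) :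
    t = (e ᵥ* B ⬝ᵥ T + (c - e ⬝ᵥ d)) / (e ᵥ* B ⬝ᵥ e) := by
  rw [eq_div_iff hs]
  rw [hD, dotProduct_add, dotProduct_mulVec, vecMul_neg, neg_dotProduct, dotProduct_sub,
    dotProduct_smul, smul_eq_mul] at he
  linear_combination he

theorem eq_mulVec_add_of_dotProduct_eq [DecidableEq ι] {B : Matrix ι ι K} {e T d D : ι → K}
    {t c : K} (hD : D = -B *ᵥ (T - t • e) + d) (he : e ⬝ᵥ D = c) (hs : e ᵥ* B ⬝ᵥ e ≠ 0) :
    D = (-B * (1 - vecMulVec e ((e ᵥ* B ⬝ᵥ e)⁻¹ • e ᵥ* B))) *ᵥ T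
      + ((c - e ⬝ᵥ d) / (e ᵥ* B ⬝ᵥ e)) • B *ᵥ e + d := by
  have ht := eq_div_of_dotProduct_eq hD he hs
  rw [← mulVec_mulVec, mulVec_one_sub_vecMulVec, hD, ht, smul_dotProduct, smul_eq_mul]
  simp only [neg_mulVec, mulVec_sub, mulVec_smul]
  rw [add_div, inv_mul_eq_div]
  module

end Matrix

theorem stmt8_general (n : ℕ) (w m : Fin n → ℝ) (cp : ℝ) (A : Matrix (Fin n) (Fin n) ℝ)
    (V Tout D : Fin n → ℝ) (Tsup Dstar : ℝ)
    (hw : ∀ i, 0 < w i) (hm : ∀ i, 0 < m i) (hcp : 0 < cp)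
    (ones : Fin n → ℝ)
    (W M : Matrix (Fin n) (Fin n) ℝ)
    (hW : W = Matrix.diagonal w) (hM : M = Matrix.diagonal (fun i => cp * m i))
    (s : ℝ) (hs : s = Matrix.vecMul ones (W⁻¹ * M * A) ⬝ᵥ ones) (hs0 : s ≠ 0)
    (C1 : Fin n → ℝ) (hC1 : C1 = s⁻¹ • Matrix.vecMul ones (W⁻¹ * M * A))
    (C2 : ℝ) (hC2 : C2 = (Dstar + ones ⬝ᵥ (W⁻¹).mulVec V) / s)
    (C3 : Matrix (Fin n) (Fin n) ℝ)
    (hC3 : C3 = -(W⁻¹ * M * A) * (1 - Matrix.vecMulVec ones C1))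
    (C4 : Fin n → ℝ)
    (hC4 : C4 = C2 • (W⁻¹ * M * A).mulVec ones - (W⁻¹).mulVec V)
    (hsteady : 0 = A.mulVec (Tout - Tsup • ones) + (M⁻¹).mulVec (V + W.mulVec D))
    (hwork : ones ⬝ᵥ D = Dstar) :
    D = C3.mulVec Tout + C4 := by
  have hWdet : IsUnit W.det := by
    rw [hW, det_diagonal]
    exact (Finset.prod_pos fun i _ => hw i).ne'.isUnit
  have hMdet : IsUnit M.det := by
    rw [hM, det_diagonal]
    exact (Finset.prod_pos fun i _ => mul_pos hcp (hm i)).ne'.isUnit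
  have hD := eq_neg_mulVec_sub_of_mulVec_add_inv_mulVec_eq_zero hMdet hWdet hsteady.symm
  rw [sub_eq_add_neg] at hD
  have key := eq_mulVec_add_of_dotProduct_eq hD hwork (hs ▸ hs0)
  rw [← hs, ← hC1, ← hC3, dotProduct_neg, sub_neg_eq_add, ← hC2] at key
  rw [key, hC4, add_assoc, ← sub_eq_add_neg]

/-- At steady state with total workload `D*`, the workload distribution
is uniquely determined: `D = C₃ T_out + C₄(D*)`. -/
theorem stmt8 (n : ℕ) (w m : Fin n → ℝ) (cp : ℝ) (A : Matrix (Fin n) (Fin n) ℝ)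
    (V Tout D : Fin n → ℝ) (Tsup Dstar : ℝ)
    (hw : ∀ i, 0 < w i) (hm : ∀ i, 0 < m i) (hcp : 0 < cp)
    (ones : Fin n → ℝ) (hones : ones = fun _ => 1)
    (W M : Matrix (Fin n) (Fin n) ℝ)
    (hW : W = Matrix.diagonal w) (hM : M = Matrix.diagonal (fun i => cp * m i))
    (s : ℝ) (hs : s = Matrix.vecMul ones (W⁻¹ * M * A) ⬝ᵥ ones) (hs0 : s ≠ 0)
    (C1 : Fin n → ℝ) (hC1 : C1 = s⁻¹ • Matrix.vecMul ones (W⁻¹ * M * A))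
    (C2 : ℝ) (hC2 : C2 = (Dstar + ones ⬝ᵥ (W⁻¹).mulVec V) / s)
    (C3 : Matrix (Fin n) (Fin n) ℝ)
    (hC3 : C3 = -(W⁻¹ * M * A) * (1 - Matrix.vecMulVec ones C1))
    (C4 : Fin n → ℝ)
    (hC4 : C4 = C2 • (W⁻¹ * M * A).mulVec ones - (W⁻¹).mulVec V)
    (hsteady : 0 = A.mulVec (Tout - Tsup • ones) + (M⁻¹).mulVec (V + W.mulVec D))
    (hwork : ones ⬝ᵥ D = Dstar) :
    D = C3.mulVec Tout + C4 :=
  stmt8_general n w m cp A V Tout D Tsup Dstar hw hm hcp ones W M hW hM s hs hs0 C1 hC1 C2 hC2 C3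
    hC3 C4 hC4 hsteady hwork
end

section
/- Let C_3 have entries C_3^{ij} = −(c_p ρ/w)((γ_ji − δ_ji) f_j + (f_i − Σ_l γ_li f_l)(f_j − Σ_k γ_kj f_k)/f_sup), where f_sup = Σ_l (f_l − Σ_k γ_kl f_k) > 0. Under the assumptions γ_ij ∈ (0,1), f_i > 0, f_i − Σ_l γ_li f_l > 0 for all i, and f_j − Σ_k γ_kj f_k < f_sup for all j, every off-diagonal entry of C_3 is strictly negative and every diagonal entry is strictly positive. -/
open Matrix Finset

/-- For the homogeneous data center, the entries of `C₃` satisfy: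
off-diagonal entries are strictly negative, diagonal entries strictly positive. -/
theorem stmt11 (n : ℕ) (ρ cp w : ℝ) (f : Fin n → ℝ) (Γ : Matrix (Fin n) (Fin n) ℝ)
    (hρ : 0 < ρ) (hcp : 0 < cp) (hw : 0 < w)
    (hf : ∀ i, 0 < f i)
    (hγ : ∀ i j, 0 < Γ i j) (hγ1 : ∀ i j, Γ i j < 1)
    (fsup : ℝ) (hfsup : fsup = ∑ l, (f l - ∑ k, Γ k l * f k)) (hfsup0 : 0 < fsup)
    (hCRAC : ∀ i, 0 < f i - ∑ l, Γ l i * f l)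
    (hret : ∀ j, 0 < f j - ∑ k, Γ k j * f k)
    (hretlt : ∀ j, f j - (∑ k, Γ k j * f k) < fsup)
    (C3 : Matrix (Fin n) (Fin n) ℝ)
    (hC3 : ∀ i j, C3 i j = -(cp * ρ / w) *
      ((Γ j i - (if j = i then (1 : ℝ) else 0)) * f j +
        (f i - ∑ l, Γ l i * f l) * (f j - ∑ k, Γ k j * f k) / fsup)) :
    (∀ i j, i ≠ j → C3 i j < 0) ∧ (∀ i, 0 < C3 i i) := by
  have hc : 0 < cp * ρ / w := by positivity
  constructor
  · intro i j hij
    rw [hC3]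
    have hne : j ≠ i := fun h => hij h.symm
    rw [if_neg hne]
    have h1 : 0 < (Γ j i - 0) * f j := by
      have := hγ j i; have := hf j; nlinarith
    have h2 : 0 < (f i - ∑ l, Γ l i * f l) * (f j - ∑ k, Γ k j * f k) / fsup := by
      have := hCRAC i; have := hret j; positivity
    nlinarith
  · intro i
    rw [hC3, if_pos rfl]
    set d : Fin n → ℝ := fun j => f j - ∑ k, Γ k j * f k with hd
    have hdi : 0 < d i := hret i
    have hlt : d i < fsup := hretlt i
    have hsq : d i * d i / fsup < d i := by
      rw [div_lt_iff₀ hfsup0]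
      nlinarith
    have hsum : Γ i i * f i ≤ ∑ k, Γ k i * f k := by
      apply Finset.single_le_sum (f := fun k => Γ k i * f k)
      · intro k _; have := hγ k i; have := hf k; positivity
      · exact Finset.mem_univ i
    have hkey : (Γ i i - 1) * f i + d i * d i / fsup < 0 := by
      have : d i ≤ (1 - Γ i i) * f i := by
        simp only [hd]; nlinarith
      nlinarith
    nlinarith
end

section
/- Consider the closed-loop system Ṫ̃ = A T̃ − A 𝟙 T̃_sup + B D̃, Ṫ̃_sup = 𝟙^T A^T Z T̃, Ḋ̃ = (𝟙𝟙^T/n − I_n) B^T Z T̃, where A is Hurwitz, Z = Z^T ≻ 0 satisfies A^T Z + Z A = −2 I_n, B = M^{-1} W, and 𝟙^T D̃(0) = 0. Then V_tot(T̃, T̃_sup, D̃) = ½ T̃^T Z T̃ + ½‖T̃_sup‖² + ½‖D̃‖² satisfies d/dt V_tot = −‖T̃‖² ≤ 0 along solutions; in particular all solutions are bounded. -/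
/-!
Differentiating `V_tot` along the flow leaves `T̃ ⬝ Z Ṫ̃ + T̃_sup Ṫ̃_sup + D̃ ⬝ Ḋ̃`. By the
Lyapunov equation and symmetry of `Z`, `T̃ ⬝ Z A T̃ = -‖T̃‖²`; the term `-T̃_sup (T̃ ⬝ Z A 𝟙)` is
cancelled exactly by `T̃_sup Ṫ̃_sup`. Since `𝟙ᵀ (𝟙𝟙ᵀ/n - I) = 0`, the sum `𝟙 ⬝ D̃` is conserved,
hence zero, so `D̃ᵀ (𝟙𝟙ᵀ/n - I) = -D̃ᵀ` and `D̃ ⬝ Ḋ̃` cancels `T̃ ⬝ Z B D̃`. A nonpositive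
derivative makes `V_tot` antitone.
-/

open Matrix

section Calculus

variable {ι κ : Type*} [Fintype ι] {t : ℝ}

theorem HasDerivAt.dotProduct {f g : ℝ → ι → ℝ} {f' g' : ι → ℝ}
    (hf : HasDerivAt f f' t) (hg : HasDerivAt g g' t) :
    HasDerivAt (fun s => f s ⬝ᵥ g s) (f' ⬝ᵥ g t + f t ⬝ᵥ g') t := by
  rw [hasDerivAt_pi] at hf hg
  show HasDerivAt (fun s => ∑ i, f s i * g s i) (∑ i, f' i * g t i + ∑ i, f t i * g' i) t
  rw [← Finset.sum_add_distrib]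
  exact .fun_sum fun i _ => (hf i).mul (hg i)

theorem HasDerivAt.const_mulVec (P : Matrix κ ι ℝ) {f : ℝ → ι → ℝ} {f' : ι → ℝ}
    (hf : HasDerivAt f f' t) : HasDerivAt (fun s => P *ᵥ f s) (P *ᵥ f') t :=
  hasDerivAt_pi.2 fun _ => (hasDerivAt_const t _).dotProduct hf |>.congr_deriv
    (by rw [zero_dotProduct, zero_add]; rfl)

theorem HasDerivAt.half_dotProduct_mulVec_self {Z : Matrix ι ι ℝ} (hZ : Z.IsSymm)
    {f : ℝ → ι → ℝ} {f' : ι → ℝ} (hf : HasDerivAt f f' t) :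
    HasDerivAt (fun s => 1 / 2 * (f s ⬝ᵥ Z *ᵥ f s)) (f t ⬝ᵥ Z *ᵥ f') t := by
  refine ((hf.dotProduct (hf.const_mulVec Z)).const_mul (1 / 2)).congr_deriv ?_
  rw [← dotProduct_transpose_mulVec, hZ.eq]
  ring

theorem dotProduct_eq_of_hasDerivAt_mulVec [Fintype κ] {P : Matrix ι κ ℝ} {D : ℝ → ι → ℝ}
    {u : ℝ → κ → ℝ} {v : ι → ℝ} (hD : ∀ t, HasDerivAt D (P *ᵥ u t) t) (hv : v ᵥ* P = 0)
    (t : ℝ) : v ⬝ᵥ D t = v ⬝ᵥ D 0 := by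
  have hconst : ∀ t, HasDerivAt (fun s => v ⬝ᵥ D s) 0 t := fun t =>
    ((hasDerivAt_const t v).dotProduct (hD t)).congr_deriv (by simp [dotProduct_mulVec, hv])
  exact is_const_of_deriv_eq_zero (fun s => (hconst s).differentiableAt)
    (fun s => (hconst s).deriv) t 0

end Calculus

section Algebra

variable {ι R : Type*} [Fintype ι]

theorem Matrix.IsSymm.two_mul_dotProduct_mulVec_mulVec [CommRing R] {Z : Matrix ι ι R}
    (hZ : Z.IsSymm) (A : Matrix ι ι R) (x : ι → R) :
    2 * (x ⬝ᵥ Z *ᵥ (A *ᵥ x)) = x ⬝ᵥ (Aᵀ * Z + Z * A) *ᵥ x := by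
  have hcross : x ⬝ᵥ Aᵀ *ᵥ (Z *ᵥ x) = x ⬝ᵥ Z *ᵥ (A *ᵥ x) := by
    rw [dotProduct_transpose_mulVec, dotProduct_comm, ← dotProduct_transpose_mulVec, hZ.eq]
  rw [add_mulVec, dotProduct_add, ← mulVec_mulVec, ← mulVec_mulVec, hcross]
  ring

theorem vecMul_smul_vecMulVec_one_sub_one [DecidableEq ι] [CommRing R] (c : R) (v : ι → R) :
    v ᵥ* (c • vecMulVec 1 1 - 1) = (c * (v ⬝ᵥ 1)) • 1 - v := by
  rw [vecMul_sub, vecMul_smul, vecMul_vecMulVec, vecMul_one, smul_smul]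

theorem one_vecMul_inv_card_smul_vecMulVec_one_sub_one [DecidableEq ι] [Field R] [CharZero R] :
    (1 : ι → R) ᵥ* ((Fintype.card ι : R)⁻¹ • vecMulVec 1 (1 : ι → R) - 1) = 0 := by
  cases isEmpty_or_nonempty ι
  · exact Subsingleton.elim _ _
  rw [vecMul_smul_vecMulVec_one_sub_one, dotProduct_one]
  simp [Fintype.card_ne_zero]

theorem vecMul_smul_vecMulVec_one_sub_one_of_one_dotProduct_eq_zero [DecidableEq ι] [CommRing R]
    (c : R) {v : ι → R} (hv : 1 ⬝ᵥ v = 0) : v ᵥ* (c • vecMulVec 1 1 - 1) = -v := by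
  rw [vecMul_smul_vecMulVec_one_sub_one, dotProduct_comm, hv]
  simp

theorem closedLoop_storageRate_eq_neg_dotProduct_self [DecidableEq ι] [Field R] [CharZero R]
    {A B Z K : Matrix ι ι R} (hZ : Z.IsSymm) (hLyap : Aᵀ * Z + Z * A = (-2 : R) • 1) {T D : ι → R}
    (hKD : D ᵥ* K = -D) (s : R) :
    T ⬝ᵥ Z *ᵥ (A *ᵥ T - s • A *ᵥ 1 + B *ᵥ D) + s * (1 ⬝ᵥ (Aᵀ * Z) *ᵥ T)
      + D ⬝ᵥ (K * Bᵀ * Z) *ᵥ T = -(T ⬝ᵥ T) := by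
  have hdiss : T ⬝ᵥ Z *ᵥ (A *ᵥ T) = -(T ⬝ᵥ T) := by
    have h := hZ.two_mul_dotProduct_mulVec_mulVec A T
    rw [hLyap, smul_mulVec, one_mulVec, dotProduct_smul, smul_eq_mul] at h
    linear_combination h / 2
  have hsupply : 1 ⬝ᵥ (Aᵀ * Z) *ᵥ T = T ⬝ᵥ Z *ᵥ (A *ᵥ 1) := by
    rw [← dotProduct_transpose_mulVec, transpose_mul, transpose_transpose, hZ.eq, mulVec_mulVec]
  have hdemand : D ⬝ᵥ (K * Bᵀ * Z) *ᵥ T = -(T ⬝ᵥ Z *ᵥ (B *ᵥ D)) := by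
    rw [Matrix.mul_assoc, ← mulVec_mulVec, dotProduct_mulVec, hKD, neg_dotProduct,
      ← dotProduct_transpose_mulVec, transpose_mul, transpose_transpose, hZ.eq, mulVec_mulVec]
  rw [mulVec_add, mulVec_sub, mulVec_smul, dotProduct_add, dotProduct_sub, dotProduct_smul,
    smul_eq_mul, hdiss, hsupply, hdemand]
  ring

end Algebra

theorem stmt14_general (n : ℕ) (A B Z : Matrix (Fin n) (Fin n) ℝ)
    (hZsymm : Z.IsSymm)
    (hLyap : Aᵀ * Z + Z * A = (-2 : ℝ) • (1 : Matrix (Fin n) (Fin n) ℝ))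
    (ones : Fin n → ℝ) (hones : ones = fun _ => 1)
    (K : Matrix (Fin n) (Fin n) ℝ)
    (hK : K = (n : ℝ)⁻¹ • Matrix.vecMulVec ones ones - 1)
    (Tt : ℝ → Fin n → ℝ) (st : ℝ → ℝ) (Dt : ℝ → Fin n → ℝ)
    -- closed-loop dynamics
    (hT : ∀ t, HasDerivAt Tt
      (A.mulVec (Tt t) - st t • A.mulVec ones + B.mulVec (Dt t)) t)
    (hst : ∀ t, HasDerivAt st (ones ⬝ᵥ (Aᵀ * Z).mulVec (Tt t)) t)
    (hDt : ∀ t, HasDerivAt Dt ((K * Bᵀ * Z).mulVec (Tt t)) t)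
    (hD0 : ones ⬝ᵥ Dt 0 = 0)
    (Vtot : ℝ → ℝ)
    (hVtot : Vtot = fun t =>
      (1 / 2) * (Tt t ⬝ᵥ Z.mulVec (Tt t)) + (1 / 2) * (st t) ^ 2 +
        (1 / 2) * (Dt t ⬝ᵥ Dt t)) :
    (∀ t, HasDerivAt Vtot (-(Tt t ⬝ᵥ Tt t)) t) ∧
    (∀ t, 0 ≤ t → Vtot t ≤ Vtot 0) := by
  obtain rfl : ones = 1 := hones
  have hK1 : (1 : Fin n → ℝ) ᵥ* K = 0 := by
    simpa [hK] using one_vecMul_inv_card_smul_vecMulVec_one_sub_one (ι := Fin n) (R := ℝ)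
  have hbalance : ∀ t, 1 ⬝ᵥ Dt t = 0 := fun t =>
    (dotProduct_eq_of_hasDerivAt_mulVec hDt
      (by rw [Matrix.mul_assoc, ← vecMul_vecMul, hK1, zero_vecMul]) t).trans hD0
  have hV : ∀ t, HasDerivAt Vtot (-(Tt t ⬝ᵥ Tt t)) t := fun t => by
    have hKD : Dt t ᵥ* K = -Dt t :=
      hK ▸ vecMul_smul_vecMulVec_one_sub_one_of_one_dotProduct_eq_zero _ (hbalance t)
    rw [hVtot]
    refine ((((hT t).half_dotProduct_mulVec_self hZsymm).add
      (((hst t).pow 2).const_mul (1 / 2))).add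
      (((hDt t).dotProduct (hDt t)).const_mul (1 / 2))).congr_deriv ?_
    rw [← closedLoop_storageRate_eq_neg_dotProduct_self hZsymm hLyap hKD (st t),
      dotProduct_comm _ (Dt t)]
    ring
  refine ⟨hV, fun t ht => antitone_of_hasDerivAt_nonpos hV (fun s => ?_) ht⟩
  exact neg_nonpos.2 (Finset.sum_nonneg fun i _ => mul_self_nonneg (Tt s i))

/-- Along solutions of the closed-loop incremental system, the total
storage function `V_tot = ½ T̃ᵀZT̃ + ½T̃_sup² + ½‖D̃‖²` satisfies
`d/dt V_tot = -‖T̃‖² ≤ 0`; in particular it is nonincreasing (solutions are bounded). -/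
theorem stmt14 (n : ℕ) (A B Z M W : Matrix (Fin n) (Fin n) ℝ)
    (mv wv : Fin n → ℝ) (hm : ∀ i, 0 < mv i) (hw : ∀ i, 0 < wv i)
    (hM : M = Matrix.diagonal mv) (hW : W = Matrix.diagonal wv)
    (hB : B = M⁻¹ * W)
    (hHurwitz : ∀ μ ∈ spectrum ℂ (A.map (fun x => (x : ℂ))), μ.re < 0)
    (hZsymm : Z.IsSymm) (hZpos : Z.PosDef)
    (hLyap : Aᵀ * Z + Z * A = (-2 : ℝ) • (1 : Matrix (Fin n) (Fin n) ℝ))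
    (ones : Fin n → ℝ) (hones : ones = fun _ => 1)
    (K : Matrix (Fin n) (Fin n) ℝ)
    (hK : K = (n : ℝ)⁻¹ • Matrix.vecMulVec ones ones - 1)
    (Tt : ℝ → Fin n → ℝ) (st : ℝ → ℝ) (Dt : ℝ → Fin n → ℝ)
    -- closed-loop dynamics
    (hT : ∀ t, HasDerivAt Tt
      (A.mulVec (Tt t) - st t • A.mulVec ones + B.mulVec (Dt t)) t)
    (hst : ∀ t, HasDerivAt st (ones ⬝ᵥ (Aᵀ * Z).mulVec (Tt t)) t)
    (hDt : ∀ t, HasDerivAt Dt ((K * Bᵀ * Z).mulVec (Tt t)) t)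
    (hD0 : ones ⬝ᵥ Dt 0 = 0)
    (Vtot : ℝ → ℝ)
    (hVtot : Vtot = fun t =>
      (1 / 2) * (Tt t ⬝ᵥ Z.mulVec (Tt t)) + (1 / 2) * (st t) ^ 2 +
        (1 / 2) * (Dt t ⬝ᵥ Dt t)) :
    (∀ t, HasDerivAt Vtot (-(Tt t ⬝ᵥ Tt t)) t) ∧
    (∀ t, 0 ≤ t → Vtot t ≤ Vtot 0) :=
  stmt14_general n A B Z hZsymm hLyap ones hones K hK Tt st Dt hT hst hDt hD0 Vtot hVtot
end

section
/- In the homogeneous data center, given the steady-state and total-workload constraints, the total power cost C(T_out, T_sup, D) = (1 + 1/COP(T_sup))·(n v + w D*) is a strictly decreasing function of T_sup = C_1^T T_out + C_2(D*); hence the optimization problem min over (T_out, T_sup, D) of Q_rem/COP(T_sup) + 𝟙^T P(D) subject to 𝟙^T D = D*, 0 ≼ D ≼ D_max, steady state, and T_out ≼ T_safe, is equivalent to max C_1^T T_out subject to 0 ≼ C_3 T_out + C_4(D*) ≼ D_max and T_out ≼ T_safe. -/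
open Matrix

/-- In the homogeneous data center, under the steady-state and
total-workload constraints the total power cost
`C = (1 + 1/COP(T_sup))·(n v + w D*)` is strictly decreasing in `T_sup`, and the
energy-minimization problem is equivalent to the reduced problem of maximizing
`C₁ᵀ T_out` subject to `0 ≼ C₃ T_out + C₄ ≼ D_max` and `T_out ≼ T_safe`. -/
theorem stmt19 (n : ℕ) (v w cp : ℝ) (m : Fin n → ℝ) (A : Matrix (Fin n) (Fin n) ℝ)
    (Dstar : ℝ) (Dmax Tsafe : Fin n → ℝ)
    (COP : ℝ → ℝ) (hCOPpos : ∀ x, 0 < COP x) (hCOPmono : StrictMono COP)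
    (hv : 0 < v) (hw : 0 < w) (hcp : 0 < cp) (hm : ∀ i, 0 < m i)
    (htot : 0 < n * v + w * Dstar)
    (ones : Fin n → ℝ) (hones : ones = fun _ => 1)
    (W M : Matrix (Fin n) (Fin n) ℝ)
    (hW : W = Matrix.diagonal (fun _ => w))
    (hM : M = Matrix.diagonal (fun i => cp * m i))
    (V : Fin n → ℝ) (hV : V = v • ones)
    (s : ℝ) (hs : s = Matrix.vecMul ones (W⁻¹ * M * A) ⬝ᵥ ones) (hs0 : s ≠ 0)
    (C1 : Fin n → ℝ) (hC1 : C1 = s⁻¹ • Matrix.vecMul ones (W⁻¹ * M * A))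
    (C2 : ℝ) (hC2 : C2 = (Dstar + ones ⬝ᵥ (W⁻¹).mulVec V) / s)
    (C3 : Matrix (Fin n) (Fin n) ℝ)
    (hC3 : C3 = -(W⁻¹ * M * A) * (1 - Matrix.vecMulVec ones C1))
    (C4 : Fin n → ℝ)
    (hC4 : C4 = C2 • (W⁻¹ * M * A).mulVec ones - (W⁻¹).mulVec V)
    -- total power cost of the full problem
    (cost : (Fin n → ℝ) → ℝ → (Fin n → ℝ) → ℝ)
    (hcost : cost = fun T Ts D =>
      (-(ones ⬝ᵥ (M * A).mulVec (T - Ts • ones))) / COP Ts + ones ⬝ᵥ (V + W.mulVec D))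
    -- feasibility of the full problem
    (fullfeas : (Fin n → ℝ) → ℝ → (Fin n → ℝ) → Prop)
    (hfull : fullfeas = fun T Ts D =>
      ones ⬝ᵥ D = Dstar ∧
      (∀ i, 0 ≤ D i ∧ D i ≤ Dmax i) ∧
      0 = A.mulVec (T - Ts • ones) + (M⁻¹).mulVec (V + W.mulVec D) ∧
      (∀ i, T i ≤ Tsafe i))
    -- feasibility of the reduced problem
    (redfeas : (Fin n → ℝ) → Prop)
    (hred : redfeas = fun T =>
      (∀ i, 0 ≤ (C3.mulVec T + C4) i ∧ (C3.mulVec T + C4) i ≤ Dmax i) ∧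
      (∀ i, T i ≤ Tsafe i)) :
    -- the cost is strictly decreasing in the supply temperature
    StrictAnti (fun Ts => (1 + 1 / COP Ts) * (n * v + w * Dstar)) ∧
    -- equivalence of the two optimization problems
    (∀ Tbar : Fin n → ℝ,
      (redfeas Tbar ∧ ∀ T, redfeas T → C1 ⬝ᵥ T ≤ C1 ⬝ᵥ Tbar) ↔
      (fullfeas Tbar (C1 ⬝ᵥ Tbar + C2) (C3.mulVec Tbar + C4) ∧
        ∀ T Ts D, fullfeas T Ts D →
          cost Tbar (C1 ⬝ᵥ Tbar + C2) (C3.mulVec Tbar + C4) ≤ cost T Ts D)) := by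
  -- Part 1: strict antitonicity
  have part1 : StrictAnti (fun Ts => (1 + 1 / COP Ts) * (n * v + w * Dstar)) := by
    intro a b hab
    have h1 : COP a < COP b := hCOPmono hab
    have h2 : 1 / COP b < 1 / COP a := one_div_lt_one_div_of_lt (hCOPpos a) h1
    exact mul_lt_mul_of_pos_right (by linarith) htot
  -- basic matrix facts
  have hWinv : W⁻¹ = Matrix.diagonal (fun _ => w⁻¹) := by
    rw [hW]
    apply Matrix.inv_eq_right_inv
    rw [Matrix.diagonal_mul_diagonal]
    simp [mul_inv_cancel₀ hw.ne']
  have hWW : W * W⁻¹ = 1 := by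
    rw [hWinv, hW, Matrix.diagonal_mul_diagonal]
    simp [mul_inv_cancel₀ hw.ne']
  have hWinvW : W⁻¹ * W = 1 := by
    rw [hWinv, hW, Matrix.diagonal_mul_diagonal]
    simp [inv_mul_cancel₀ hw.ne']
  have hMdet : M.det ≠ 0 := by
    rw [hM, Matrix.det_diagonal]
    exact (Finset.prod_pos (fun i _ => mul_pos hcp (hm i))).ne'
  have hMM : M * M⁻¹ = 1 := Matrix.mul_nonsing_inv _ (isUnit_iff_ne_zero.mpr hMdet)
  have hMinvM : M⁻¹ * M = 1 := Matrix.nonsing_inv_mul _ (isUnit_iff_ne_zero.mpr hMdet)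
  set K : Matrix (Fin n) (Fin n) ℝ := W⁻¹ * M * A with hK
  set u : Fin n → ℝ := Matrix.vecMul ones K with hu
  set r : Fin n → ℝ := (W⁻¹).mulVec V with hr
  have hus : u ⬝ᵥ ones = s := hs.symm
  -- W * K = M * A
  have hWK : W * K = M * A := by
    rw [hK, ← Matrix.mul_assoc, ← Matrix.mul_assoc, hWW, Matrix.one_mul]
  have hKMA : W⁻¹ * (M * A) = K := by
    rw [hK, Matrix.mul_assoc]
  -- steady state equivalence
  have hSS : ∀ (T : Fin n → ℝ) (Ts : ℝ) (D : Fin n → ℝ),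
      (0 = A.mulVec (T - Ts • ones) + (M⁻¹).mulVec (V + W.mulVec D)) ↔
      ((M * A).mulVec (T - Ts • ones) + (V + W.mulVec D) = 0) := by
    intro T Ts D
    constructor
    · intro h
      have h2 := congrArg (M.mulVec) h.symm
      rwa [Matrix.mulVec_add, Matrix.mulVec_mulVec, Matrix.mulVec_mulVec, hMM,
        Matrix.one_mulVec, Matrix.mulVec_zero] at h2
    · intro h
      have h2 := congrArg ((M⁻¹).mulVec) h
      rwa [Matrix.mulVec_add, Matrix.mulVec_mulVec, ← Matrix.mul_assoc, hMinvM,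
        Matrix.one_mul, Matrix.mulVec_zero, eq_comm] at h2
  -- vecMulVec action
  have hvmv : ∀ T : Fin n → ℝ, (Matrix.vecMulVec ones C1).mulVec T = (C1 ⬝ᵥ T) • ones := by
    intro T
    funext i
    simp [Matrix.mulVec, Matrix.vecMulVec_apply, dotProduct, hones]
  have hC1dot : ∀ T : Fin n → ℝ, C1 ⬝ᵥ T = s⁻¹ * (u ⬝ᵥ T) := by
    intro T
    rw [hC1]
    simp [smul_eq_mul]
  -- key identity for D
  have hD : ∀ T : Fin n → ℝ, C3.mulVec T + C4
      = -(K.mulVec (T - (C1 ⬝ᵥ T + C2) • ones)) - r := by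
    intro T
    rw [hC3, hC4]
    rw [← Matrix.mulVec_mulVec, Matrix.sub_mulVec, Matrix.one_mulVec, hvmv,
      Matrix.neg_mulVec, Matrix.mulVec_sub, Matrix.mulVec_smul]
    rw [Matrix.mulVec_sub, Matrix.mulVec_smul, add_smul]
    module
  -- W applied to the candidate D
  have hWD : ∀ T : Fin n → ℝ, W.mulVec (C3.mulVec T + C4)
      = -((M * A).mulVec (T - (C1 ⬝ᵥ T + C2) • ones)) - V := by
    intro T
    rw [hD]
    rw [Matrix.mulVec_sub, Matrix.mulVec_neg, Matrix.mulVec_mulVec, Matrix.mulVec_mulVec,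
      hWK, hWW, Matrix.one_mulVec]
  -- sum of candidate D is Dstar
  have hC2s : C2 * s = Dstar + ones ⬝ᵥ r := by
    rw [hC2, div_mul_cancel₀ _ hs0]
  have hsumD : ∀ T : Fin n → ℝ, ones ⬝ᵥ (C3.mulVec T + C4) = Dstar := by
    intro T
    rw [hD]
    rw [dotProduct_sub, dotProduct_neg, Matrix.dotProduct_mulVec, ← hu,
      dotProduct_sub, dotProduct_smul, hus, smul_eq_mul, hC1dot]
    have h1 : (s⁻¹ * (u ⬝ᵥ T) + C2) * s = u ⬝ᵥ T + C2 * s := by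
      field_simp
    linarith [hC2s, h1]
  -- candidate triple satisfies steady state
  have hSScand : ∀ T : Fin n → ℝ,
      0 = A.mulVec (T - (C1 ⬝ᵥ T + C2) • ones)
        + (M⁻¹).mulVec (V + W.mulVec (C3.mulVec T + C4)) := by
    intro T
    rw [hSS, hWD]
    abel
  -- from fullfeas, recover Ts and D
  have hrecover : ∀ (T : Fin n → ℝ) (Ts : ℝ) (D : Fin n → ℝ), fullfeas T Ts D →
      Ts = C1 ⬝ᵥ T + C2 ∧ D = C3.mulVec T + C4 := by
    intro T Ts D hf
    rw [hfull] at hf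
    obtain ⟨hsum, _, hss, _⟩ := hf
    rw [hSS] at hss
    have hWDval : W.mulVec D = -((M * A).mulVec (T - Ts • ones)) - V := by
      have := hss
      funext i
      have h := congrFun this i
      simp only [Pi.add_apply, Pi.zero_apply, Pi.sub_apply, Pi.neg_apply] at h ⊢
      linarith
    have hDval : D = -(K.mulVec (T - Ts • ones)) - r := by
      have h1 : (W⁻¹).mulVec (W.mulVec D) = D := by
        rw [Matrix.mulVec_mulVec, hWinvW, Matrix.one_mulVec]
      rw [← h1, hWDval, Matrix.mulVec_sub, Matrix.mulVec_neg, Matrix.mulVec_mulVec, hKMA, hr]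
    have hsum2 : -(u ⬝ᵥ T - Ts * s) - ones ⬝ᵥ r = Dstar := by
      have h3 := hsum
      rw [hDval] at h3
      rwa [dotProduct_sub, dotProduct_neg, Matrix.dotProduct_mulVec, ← hu,
        dotProduct_sub, dotProduct_smul, hus, smul_eq_mul] at h3
    have hTs : Ts = C1 ⬝ᵥ T + C2 := by
      have h1 : Ts * s = u ⬝ᵥ T + (Dstar + ones ⬝ᵥ r) := by linarith [hsum2]
      have h2 : Ts = (u ⬝ᵥ T + (Dstar + ones ⬝ᵥ r)) / s := by
        rw [eq_div_iff hs0]; exact h1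
      rw [h2, hC1dot, hC2]
      ring
    constructor
    · exact hTs
    · rw [hD, hDval, hTs]
  -- cost value at any feasible point
  have honesV : ones ⬝ᵥ V = n * v := by
    rw [hV, hones]
    simp [dotProduct, Finset.sum_const, mul_comm]
  have hcostval : ∀ (T : Fin n → ℝ) (Ts : ℝ) (D : Fin n → ℝ), fullfeas T Ts D →
      cost T Ts D = (1 + 1 / COP Ts) * (n * v + w * Dstar) := by
    intro T Ts D hf
    have hf' := hf
    rw [hfull] at hf'
    obtain ⟨hsum, _, hss, _⟩ := hf'
    rw [hSS] at hss
    have hQ : ones ⬝ᵥ (V + W.mulVec D) = n * v + w * Dstar := by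
      rw [dotProduct_add, honesV]
      congr 1
      have hWDv : W.mulVec D = w • D := by
        funext i
        rw [hW]
        simp [Matrix.mulVec_diagonal]
      rw [hWDv, dotProduct_smul, hsum, smul_eq_mul]
    have hMA : (M * A).mulVec (T - Ts • ones) = -(V + W.mulVec D) := by
      funext i
      have h := congrFun hss i
      simp only [Pi.add_apply, Pi.zero_apply, Pi.neg_apply] at h ⊢
      linarith
    rw [hcost]
    simp only
    rw [hMA, dotProduct_neg, neg_neg, hQ]
    have hc := (hCOPpos Ts).ne'
    field_simp
    ring
  refine ⟨part1, fun Tbar => ?_⟩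
  -- fullfeas of the candidate for redfeas T
  have hredfull : ∀ T : Fin n → ℝ, redfeas T →
      fullfeas T (C1 ⬝ᵥ T + C2) (C3.mulVec T + C4) := by
    intro T hT
    rw [hred] at hT
    rw [hfull]
    exact ⟨hsumD T, hT.1, hSScand T, hT.2⟩
  have hfullred : ∀ (T : Fin n → ℝ) (Ts : ℝ) (D : Fin n → ℝ), fullfeas T Ts D → redfeas T := by
    intro T Ts D hf
    obtain ⟨hTs, hDval⟩ := hrecover T Ts D hf
    rw [hfull] at hf
    rw [hred]
    refine ⟨?_, hf.2.2.2⟩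
    rw [← hDval]
    exact hf.2.1
  constructor
  · rintro ⟨hfeas, hopt⟩
    have hfb := hredfull Tbar hfeas
    refine ⟨hfb, fun T Ts D hf => ?_⟩
    obtain ⟨hTs, hDval⟩ := hrecover T Ts D hf
    have hTred := hfullred T Ts D hf
    have hle : C1 ⬝ᵥ T ≤ C1 ⬝ᵥ Tbar := hopt T hTred
    rw [hcostval Tbar _ _ hfb, hcostval T Ts D hf, hTs]
    exact part1.antitone (by linarith)
  · rintro ⟨hfeas, hopt⟩
    have hTbarred := hfullred Tbar _ _ hfeas
    refine ⟨hTbarred, fun T hT => ?_⟩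
    have hf := hredfull T hT
    have hle := hopt T _ _ hf
    rw [hcostval Tbar _ _ hfeas, hcostval T _ _ hf] at hle
    by_contra hlt
    push_neg at hlt
    have := part1 (by linarith : C1 ⬝ᵥ Tbar + C2 < C1 ⬝ᵥ T + C2)
    linarith
end
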